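/- arXiv:1507.01934 — 3 statements merged into one kernel-verified Lean document; each statement's English description precedes it below -/
import Mathlib

section
/- Let G be a semicomplete digraph that has a (2l,w)-degree tangle. Then G has a tame (l,w)-degree tangle or an (l,w)-spider. -/
namespace AlmostSemicomplete

variable {V : Type} [Fintype V] [DecidableEq V]

/-- The closed out-neighborhood `N⁺[U]`. -/
def closedOut (E : V → V → Prop) [DecidableRel E] (U : Finset V) : Finset V :=
  U.biUnion fun u => insert u (Finset.univ.filter fun w => E u w)

/-- The closed in-neighborhood `N⁻[U]`. -/
def closedIn (E : V → V → Prop) [DecidableRel E] (U : Finset V) : Finset V :=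
  U.biUnion fun u => insert u (Finset.univ.filter fun w => E w u)

/-- The open out-neighborhood `N⁺(U)`. -/
def openOut (E : V → V → Prop) [DecidableRel E] (U : Finset V) : Finset V :=
  closedOut E U \ U

/-- The open in-neighborhood `N⁻(U)`. -/
def openIn (E : V → V → Prop) [DecidableRel E] (U : Finset V) : Finset V :=
  closedIn E U \ U

/-- `d⁺(U)`, the number of out-neighbors of the set `U`. -/
def dOut (E : V → V → Prop) [DecidableRel E] (U : Finset V) : ℕ := (openOut E U).card

/-- `d⁻(U)`, the number of in-neighbors of the set `U`. -/
def dIn (E : V → V → Prop) [DecidableRel E] (U : Finset V) : ℕ := (openIn E U).card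

/-- Out-neighbors of a vertex. -/
def NoutV (E : V → V → Prop) [DecidableRel E] (v : V) : Finset V :=
  Finset.univ.filter fun w => E v w

/-- In-neighbors of a vertex. -/
def NinV (E : V → V → Prop) [DecidableRel E] (v : V) : Finset V :=
  Finset.univ.filter fun w => E w v

/-- Out-degree of a vertex. -/
def dOutV (E : V → V → Prop) [DecidableRel E] (v : V) : ℕ := (NoutV E v).card

/-- In-degree of a vertex. -/
def dInV (E : V → V → Prop) [DecidableRel E] (v : V) : ℕ := (NinV E v).card

/-- A separation of a digraph: `A ∪ B = V` and no edge from `A ∖ B` to `B ∖ A`. -/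
def IsSep (E : V → V → Prop) (A B : Finset V) : Prop :=
  A ∪ B = Finset.univ ∧ ∀ a ∈ A, a ∉ B → ∀ b ∈ B, b ∉ A → ¬ E a b

/-- An `S`–`T` separation. -/
def IsSTSep (E : V → V → Prop) (S T A B : Finset V) : Prop :=
  IsSep E A B ∧ S ∩ B = ∅ ∧ T ∩ A = ∅

/-- A minimum `S`–`T` separation, i.e. one of smallest order `|A ∩ B|`. -/
def IsMinSTSep (E : V → V → Prop) (S T X Y : Finset V) : Prop :=
  IsSTSep E S T X Y ∧ ∀ A B : Finset V, IsSTSep E S T A B → (X ∩ Y).card ≤ (A ∩ B).card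

/-- A separation chain: a list of separations with the first components nondecreasing
and the second components nonincreasing. -/
def IsSepChain (E : V → V → Prop) (C : List (Finset V × Finset V)) : Prop :=
  (∀ p ∈ C, IsSep E p.1 p.2) ∧ List.Chain' (fun p q => p.1 ⊆ q.1 ∧ q.2 ⊆ p.2) C

/-- A separation chain is gapless if consecutive separations differ by at most one vertex
on at least one side. -/
def Gapless (C : List (Finset V × Finset V)) : Prop :=
  List.Chain' (fun p q => (q.1 \ p.1).card ≤ 1 ∨ (p.2 \ q.2).card ≤ 1) C

/-- A separation chain is nice if consecutive separations differ by at most one vertex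
on both sides. -/
def Nice (C : List (Finset V × Finset V)) : Prop :=
  List.Chain' (fun p q => (q.1 \ p.1).card ≤ 1 ∧ (p.2 \ q.2).card ≤ 1) C

/-- An `S`–`T` chain: a separation chain whose first separation has second component
`V ∖ S` and whose last separation has first component `V ∖ T`. -/
def IsSTChain (E : V → V → Prop) (S T : Finset V) (C : List (Finset V × Finset V)) : Prop :=
  IsSepChain E C ∧ C.head?.map Prod.snd = some (Finset.univ \ S) ∧
    C.getLast?.map Prod.fst = some (Finset.univ \ T)

/-- An `S`–`T` chain is tight if `A_0 = N⁺[S]` and `B_r = N⁻[T]`. -/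
def Tight (E : V → V → Prop) [DecidableRel E] (S T : Finset V)
    (C : List (Finset V × Finset V)) : Prop :=
  C.head?.map Prod.fst = some (closedOut E S) ∧
    C.getLast?.map Prod.snd = some (closedIn E T)

/-- The order of a separation chain: the maximum order of its member separations. -/
def chainOrder (C : List (Finset V × Finset V)) : ℕ :=
  (C.map fun p => (p.1 ∩ p.2).card).foldr max 0

/-- The chain has order at most `k`. -/
def orderLE (C : List (Finset V × Finset V)) (k : ℕ) : Prop :=
  ∀ p ∈ C, (p.1 ∩ p.2).card ≤ k

/-- A path decomposition of a digraph. -/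
def IsPathDecomp {m : ℕ} (E : V → V → Prop) (X : Fin m → Finset V) : Prop :=
  (∀ v : V, ∃ i, v ∈ X i) ∧
  (∀ u v : V, E u v → ∃ i j : Fin m, j ≤ i ∧ u ∈ X i ∧ v ∈ X j) ∧
  (∀ (v : V) (i j k : Fin m), i ≤ j → j ≤ k → v ∈ X i → v ∈ X k → v ∈ X j)

/-- The width of a path decomposition: maximum bag size minus one. -/
def pdWidth {m : ℕ} (X : Fin m → Finset V) : ℕ :=
  (Finset.univ.sup fun i => (X i).card) - 1

/-- The pathwidth of a digraph. -/
noncomputable def pathwidth (E : V → V → Prop) : ℕ :=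
  sInf {k | ∃ (m : ℕ) (X : Fin m → Finset V), IsPathDecomp E X ∧ pdWidth X = k}

/-- An `h`-semicomplete digraph: every vertex has at most `h` non-neighbors. -/
def HSemicomplete (E : V → V → Prop) [DecidableRel E] (h : ℕ) : Prop :=
  ∀ v : V, (Finset.univ.filter fun u => u ≠ v ∧ ¬ E u v ∧ ¬ E v u).card ≤ h

/-- A semicomplete digraph: between any two distinct vertices there is an edge in
at least one direction. -/
def Semicomplete (E : V → V → Prop) : Prop := ∀ u v : V, u ≠ v → E u v ∨ E v u

/-- A `k`-admissible pair `(S, T)`. -/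
def kAdmissible (E : V → V → Prop) [DecidableRel E] (k : ℕ) (S T : Finset V) : Prop :=
  closedOut E S ∩ T = ∅ ∧ dOut E S ≤ k ∧ dIn E T ≤ k

/-- The potential `μ(S,T) = 2|V ∖ (N⁺[S] ∪ N⁻[T])| + |N⁺(S) Δ N⁻(T)|`. -/
def mu (E : V → V → Prop) [DecidableRel E] (S T : Finset V) : ℕ :=
  2 * (Finset.univ \ (closedOut E S ∪ closedIn E T)).card +
    (symmDiff (openOut E S) (openIn E T)).card

/-- The wildness of a vertex. -/
def wld (E : V → V → Prop) [DecidableRel E] (v : V) : ℕ :=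
  ((Finset.univ.filter fun u => dOutV E u ≤ dOutV E v) \ NoutV E v).card

/-- A `(d, l, k)`-degree tangle. -/
def IsDegTangle (E : V → V → Prop) [DecidableRel E] (d l k : ℕ) (T : Finset V) : Prop :=
  T.card = l ∧ ∀ v ∈ T, d ≤ dOutV E v ∧ dOutV E v ≤ d + k

/-- A `(d, l, k)`-matching tangle. -/
def IsMatchTangle (E : V → V → Prop) [DecidableRel E] (d l k : ℕ)
    (T₁ T₂ : Finset V) : Prop :=
  T₁.card = l ∧ T₂.card = l ∧ (∀ v ∈ T₁, dOutV E v ≤ d) ∧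
    (∀ v ∈ T₂, d + k + 1 ≤ dOutV E v) ∧
    ∃ φ : V → V, Set.BijOn φ ↑T₁ ↑T₂ ∧ ∀ v ∈ T₁, E v (φ v)

/-- A `(d, l, w)`-spider. -/
def IsSpider (E : V → V → Prop) [DecidableRel E] (d l w : ℕ) (T : Finset V)
    (L R : V → Finset V) : Prop :=
  l ≤ T.card ∧ ∀ v ∈ T,
    L v ⊆ NinV E v ∧ 3 * l ≤ (L v).card ∧ (∀ u ∈ L v, dOutV E u ≤ d) ∧
    R v ⊆ NoutV E v ∧ 3 * l ≤ (R v).card ∧ (∀ u ∈ R v, d + w ≤ dOutV E u)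

/-- Tameness of a left-side vertex of a `(d,l,w)`-spider:
`wld(u) ≤ 3l + d + w − d⁺(u) + 2·pw(G)`, stated additively. -/
def LeftTame (E : V → V → Prop) [DecidableRel E] (d l w : ℕ) (u : V) : Prop :=
  wld E u + dOutV E u ≤ 3 * l + d + w + 2 * pathwidth E

/-- Tameness of a right-side vertex of a `(d,l,w)`-spider:
`wld(u) ≤ 3l + d⁺(u) − d + 2·pw(G)`, stated additively. -/
def RightTame (E : V → V → Prop) [DecidableRel E] (d l w : ℕ) (u : V) : Prop :=
  wld E u + d ≤ 3 * l + dOutV E u + 2 * pathwidth E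

/-- A tame `(d, l, w)`-spider: each `L_v` and each `R_v` contains at least `2l`
tame vertices. -/
def IsTameSpider (E : V → V → Prop) [DecidableRel E] (d l w : ℕ) (T : Finset V)
    (L R : V → Finset V) : Prop :=
  IsSpider E d l w T L R ∧ ∀ v ∈ T,
    (∃ L' ⊆ L v, 2 * l ≤ L'.card ∧ ∀ u ∈ L', LeftTame E d l w u) ∧
    (∃ R' ⊆ R v, 2 * l ≤ R'.card ∧ ∀ u ∈ R', RightTame E d l w u)

/-!
The engine is a window bound: in a semicomplete digraph of pathwidth `p`, at most `k + 2p`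
vertices have out-degree in `[a, a + k)`. In a path decomposition, let `v` be the vertex of
such a set `S` whose first bag `β` comes last and `u` the one whose last bag `α` comes first.
If `β ≤ α`, all of `S` lies in bag `β`. Otherwise everything forgotten before `β` is an
out-neighbour of `v`, and every out-neighbour of `u` is forgotten before `α` or lies in bag `α`;
the degree bounds at `u` and `v` then squeeze `S`.

Of the `2l` tangle vertices, either `l` are tame, or `l` are wild. A wild `v` has many
vertices of out-degree at most `d⁺(v)` outside `N⁺(v)`; by the window bound few of them have
out-degree in `(d, d + w]`, so most are in-neighbours of out-degree `≤ d`. Likewise the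
out-neighbours of `v` of out-degree `< d + w`, together with those vertices, have out-degree
`≤ d + w`, so most out-neighbours of `v` have out-degree `≥ d + w`.
-/

open Finset

section PathDecomp

variable {E : V → V → Prop} {m : ℕ} {X : Fin m → Finset V}

def forgottenBefore (X : Fin m → Finset V) (t : Fin m) : Finset V :=
  univ.filter fun v => ∀ i, v ∈ X i → i < t

lemma mem_forgottenBefore {t : Fin m} {v : V} :
    v ∈ forgottenBefore X t ↔ ∀ i, v ∈ X i → i < t := by
  simp [forgottenBefore]

lemma forgottenBefore_mono {s t : Fin m} (hst : s ≤ t) :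
    forgottenBefore X s ⊆ forgottenBefore X t := fun _ hv =>
  mem_forgottenBefore.2 fun i hi => (mem_forgottenBefore.1 hv i hi).trans_le hst

omit [Fintype V] in
lemma IsPathDecomp.exists_first_bag (hX : IsPathDecomp E X) (v : V) :
    ∃ i, v ∈ X i ∧ ∀ j, v ∈ X j → i ≤ j := by
  obtain ⟨i₀, hi₀⟩ := hX.1 v
  obtain ⟨i, hi, hmin⟩ := (univ.filter fun i => v ∈ X i).exists_min_image id ⟨i₀, by simpa⟩
  exact ⟨i, (mem_filter.1 hi).2, fun j hj => hmin j (by simpa)⟩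

omit [Fintype V] in
lemma IsPathDecomp.exists_last_bag (hX : IsPathDecomp E X) (v : V) :
    ∃ i, v ∈ X i ∧ ∀ j, v ∈ X j → j ≤ i := by
  obtain ⟨i₀, hi₀⟩ := hX.1 v
  obtain ⟨i, hi, hmax⟩ := (univ.filter fun i => v ∈ X i).exists_max_image id ⟨i₀, by simpa⟩
  exact ⟨i, (mem_filter.1 hi).2, fun j hj => hmax j (by simpa)⟩

omit [Fintype V] [DecidableEq V] in
lemma IsPathDecomp.mem_of_le_of_le (hX : IsPathDecomp E X) {v : V} {i j k : Fin m}
    (hij : i ≤ j) (hjk : j ≤ k) (hi : v ∈ X i) (hk : v ∈ X k) : v ∈ X j :=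
  hX.2.2 v i j k hij hjk hi hk

lemma IsPathDecomp.card_forgottenBefore_le_dOutV [DecidableRel E] (hX : IsPathDecomp E X)
    (hsc : Semicomplete E) {v : V} {β : Fin m} (hv : v ∈ X β)
    (hfirst : ∀ j, v ∈ X j → β ≤ j) : (forgottenBefore X β).card ≤ dOutV E v := by
  refine card_le_card fun x hx => ?_
  have hbefore := mem_forgottenBefore.1 hx
  have hne : v ≠ x := by
    rintro rfl
    exact lt_irrefl β (hbefore β hv)
  have hnot : ¬ E x v := by
    intro hxv
    obtain ⟨i, j, hji, hxi, hvj⟩ := hX.2.1 x v hxv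
    exact absurd ((hfirst j hvj).trans hji) (not_le.2 (hbefore i hxi))
  simpa [NoutV] using (hsc v x hne).resolve_right hnot

lemma IsPathDecomp.dOutV_lt_card_forgottenBefore_add_card [DecidableRel E]
    (hX : IsPathDecomp E X) (hirr : Irreflexive E) {u : V} {α : Fin m} (hu : u ∈ X α)
    (hlast : ∀ i, u ∈ X i → i ≤ α) :
    dOutV E u < (forgottenBefore X α).card + (X α).card := by
  have hsub : NoutV E u ⊆ (forgottenBefore X α ∪ X α).erase u := by
    intro x hx
    have hux : E u x := by simpa [NoutV] using hx
    refine mem_erase.2 ⟨fun h => hirr u (h ▸ hux), ?_⟩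
    by_cases hxF : x ∈ forgottenBefore X α
    · exact mem_union_left _ hxF
    · obtain ⟨k, hxk, hαk⟩ : ∃ k, x ∈ X k ∧ α ≤ k := by
        simpa [mem_forgottenBefore] using hxF
      obtain ⟨i, j, hji, hui, hxj⟩ := hX.2.1 u x hux
      exact mem_union_right _ (hX.mem_of_le_of_le (hji.trans (hlast i hui)) hαk hxj hxk)
  calc dOutV E u ≤ ((forgottenBefore X α ∪ X α).erase u).card := card_le_card hsub
    _ < (forgottenBefore X α ∪ X α).card := card_erase_lt_of_mem (mem_union_right _ hu)
    _ ≤ (forgottenBefore X α).card + (X α).card := card_union_le _ _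

lemma IsPathDecomp.subset_forgottenBefore_union (hX : IsPathDecomp E X) {S : Finset V}
    {β : Fin m} (hS : ∀ s ∈ S, ∃ j ≤ β, s ∈ X j) : S ⊆ forgottenBefore X β ∪ X β := by
  intro s hs
  by_cases hsF : s ∈ forgottenBefore X β
  · exact mem_union_left _ hsF
  · obtain ⟨k, hsk, hβk⟩ : ∃ k, s ∈ X k ∧ β ≤ k := by
      simpa [mem_forgottenBefore] using hsF
    obtain ⟨j, hjβ, hsj⟩ := hS s hs
    exact mem_union_right _ (hX.mem_of_le_of_le hjβ hβk hsj hsk)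

lemma disjoint_forgottenBefore {S : Finset V} {α : Fin m} (hS : ∀ s ∈ S, ∃ j, α ≤ j ∧ s ∈ X j) :
    Disjoint S (forgottenBefore X α) := by
  refine disjoint_left.2 fun s hs hsF => ?_
  obtain ⟨j, hαj, hsj⟩ := hS s hs
  exact lt_irrefl _ (hαj.trans_lt (mem_forgottenBefore.1 hsF j hsj))

lemma IsPathDecomp.card_le_of_dOutV_mem_Ico [DecidableRel E] (hX : IsPathDecomp E X)
    (hirr : Irreflexive E) (hsc : Semicomplete E) {p : ℕ} (hbag : ∀ i, (X i).card ≤ p + 1)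
    {a k : ℕ} {S : Finset V} (hS : ∀ v ∈ S, a ≤ dOutV E v ∧ dOutV E v < a + k) :
    S.card ≤ k + 2 * p := by
  rcases S.eq_empty_or_nonempty with rfl | hSne
  · simp
  choose first hfirst_mem hfirst_le using hX.exists_first_bag
  choose last hlast_mem hlast_le using hX.exists_last_bag
  obtain ⟨v, hvS, hvmax⟩ := S.exists_max_image first hSne
  obtain ⟨u, huS, humin⟩ := S.exists_min_image last hSne
  have hSβ : S ⊆ forgottenBefore X (first v) ∪ X (first v) :=
    hX.subset_forgottenBefore_union fun s hs => ⟨first s, hvmax s hs, hfirst_mem s⟩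
  have hSα : Disjoint S (forgottenBefore X (last u)) :=
    disjoint_forgottenBefore fun s hs => ⟨last s, humin s hs, hlast_mem s⟩
  have hv := hX.card_forgottenBefore_le_dOutV hsc (hfirst_mem v) (hfirst_le v)
  have hu := hX.dOutV_lt_card_forgottenBefore_add_card hirr (hlast_mem u) (hlast_le u)
  have := hS v hvS
  have := hS u huS
  have := hbag (first v)
  have := hbag (last u)
  rcases le_or_gt (first v) (last u) with hβα | hαβ
  · have hsub : S ⊆ X (first v) := fun s hs =>
      (mem_union.1 (hSβ hs)).resolve_left
        (disjoint_right.1 (hSα.mono_right (forgottenBefore_mono hβα)) · hs)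
    have := card_le_card hsub
    omega
  · have hsub : S ∪ forgottenBefore X (last u) ⊆ forgottenBefore X (first v) ∪ X (first v) :=
      union_subset hSβ ((forgottenBefore_mono hαβ.le).trans subset_union_left)
    have := card_le_card hsub
    rw [card_union_of_disjoint hSα] at this
    have := card_union_le (forgottenBefore X (first v)) (X (first v))
    omega

end PathDecomp

omit [DecidableEq V] in
lemma exists_isPathDecomp_card_le_pathwidth_add_one (E : V → V → Prop) :
    ∃ (m : ℕ) (X : Fin m → Finset V), IsPathDecomp E X ∧ ∀ i, (X i).card ≤ pathwidth E + 1 := by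
  have hne : {k | ∃ (m : ℕ) (X : Fin m → Finset V), IsPathDecomp E X ∧ pdWidth X = k}.Nonempty :=
    ⟨_, 1, fun _ => univ, ⟨fun v => ⟨0, mem_univ v⟩,
      fun u v _ => ⟨0, 0, le_rfl, mem_univ u, mem_univ v⟩, fun v _ _ _ _ _ _ _ => mem_univ v⟩,
      rfl⟩
  obtain ⟨m, X, hX, hwidth⟩ := Nat.sInf_mem hne
  refine ⟨m, X, hX, fun i => ?_⟩
  have := le_sup (f := fun j => (X j).card) (mem_univ i)
  rw [← pathwidth, pdWidth] at *
  omega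

lemma card_le_of_dOutV_mem_Ico {E : V → V → Prop} [DecidableRel E] (hirr : Irreflexive E)
    (hsc : Semicomplete E) {a k : ℕ} {S : Finset V}
    (hS : ∀ v ∈ S, a ≤ dOutV E v ∧ dOutV E v < a + k) : S.card ≤ k + 2 * pathwidth E := by
  obtain ⟨m, X, hX, hbag⟩ := exists_isPathDecomp_card_le_pathwidth_add_one E
  exact hX.card_le_of_dOutV_mem_Ico hirr hsc hbag hS

section Spider

variable {E : V → V → Prop} [DecidableRel E]

/-- The sets `L_v` and `R_v` of the spider built on wild vertices `v`. -/
def spiderLeft (E : V → V → Prop) [DecidableRel E] (d : ℕ) (v : V) : Finset V :=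
  ((univ.filter fun u => dOutV E u ≤ d) \ NoutV E v).erase v

def spiderRight (E : V → V → Prop) [DecidableRel E] (d w : ℕ) (v : V) : Finset V :=
  (NoutV E v).filter fun u => d + w ≤ dOutV E u

def wildSet (E : V → V → Prop) [DecidableRel E] (v : V) : Finset V :=
  (univ.filter fun u => dOutV E u ≤ dOutV E v) \ NoutV E v

lemma card_wildSet (v : V) : (wildSet E v).card = wld E v := rfl

lemma mem_wildSet {v u : V} : u ∈ wildSet E v ↔ dOutV E u ≤ dOutV E v ∧ ¬ E v u := by
  simp [wildSet, NoutV]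

lemma spiderLeft_subset_NinV (hsc : Semicomplete E) (d : ℕ) (v : V) :
    spiderLeft E d v ⊆ NinV E v := by
  intro u hu
  simp only [spiderLeft, NoutV, NinV, mem_erase, mem_sdiff, mem_filter, mem_univ,
    true_and] at hu ⊢
  exact (hsc u v hu.1).resolve_right hu.2.2

lemma wld_le_card_spiderLeft (hirr : Irreflexive E) (hsc : Semicomplete E) {d w : ℕ} {v : V}
    (hv : dOutV E v ≤ d + w) :
    wld E v ≤ (spiderLeft E d v).card + w + 2 * pathwidth E + 1 := by
  set mid := univ.filter fun u => d + 1 ≤ dOutV E u ∧ dOutV E u < d + 1 + w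
  have hmid : mid.card ≤ w + 2 * pathwidth E :=
    card_le_of_dOutV_mem_Ico hirr hsc fun u hu => (mem_filter.1 hu).2
  have hsub : wildSet E v ⊆ insert v (spiderLeft E d v ∪ mid) := by
    intro u hu
    have hu' := mem_wildSet.1 hu
    by_cases huv : u = v
    · exact huv ▸ mem_insert_self _ _
    by_cases hud : dOutV E u ≤ d
    · refine mem_insert_of_mem (mem_union_left _ ?_)
      simpa [spiderLeft, NoutV, huv, hud] using hu'.2
    · exact mem_insert_of_mem (mem_union_right _ (mem_filter.2 ⟨mem_univ u, by omega, by omega⟩))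
  calc wld E v = (wildSet E v).card := (card_wildSet v).symm
    _ ≤ (insert v (spiderLeft E d v ∪ mid)).card := card_le_card hsub
    _ ≤ (spiderLeft E d v ∪ mid).card + 1 := card_insert_le _ _
    _ ≤ (spiderLeft E d v).card + mid.card + 1 := by gcongr; exact card_union_le _ _
    _ ≤ (spiderLeft E d v).card + w + 2 * pathwidth E + 1 := by omega

lemma wld_add_dOutV_le_card_spiderRight (hirr : Irreflexive E) (hsc : Semicomplete E)
    {d w : ℕ} {v : V} (hv : dOutV E v ≤ d + w) :
    wld E v + dOutV E v ≤ (spiderRight E d w v).card + d + w + 2 * pathwidth E + 1 := by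
  set low := univ.filter fun u => 0 ≤ dOutV E u ∧ dOutV E u < 0 + (d + w + 1)
  have hlow : low.card ≤ d + w + 1 + 2 * pathwidth E :=
    card_le_of_dOutV_mem_Ico hirr hsc fun u hu => (mem_filter.1 hu).2
  have hsub : wildSet E v ∪ NoutV E v ⊆ low ∪ spiderRight E d w v := by
    intro u hu
    rcases mem_union.1 hu with hu | hu
    · exact mem_union_left _ (mem_filter.2 ⟨mem_univ u, by have := (mem_wildSet.1 hu).1; omega⟩)
    · by_cases hud : d + w ≤ dOutV E u
      · exact mem_union_right _ (mem_filter.2 ⟨hu, hud⟩)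
      · exact mem_union_left _ (mem_filter.2 ⟨mem_univ u, by omega⟩)
  calc wld E v + dOutV E v = (wildSet E v ∪ NoutV E v).card :=
        (card_union_of_disjoint sdiff_disjoint).symm
    _ ≤ (low ∪ spiderRight E d w v).card := card_le_card hsub
    _ ≤ low.card + (spiderRight E d w v).card := card_union_le _ _
    _ ≤ (spiderRight E d w v).card + d + w + 2 * pathwidth E + 1 := by omega

lemma isSpider_of_wild (hirr : Irreflexive E) (hsc : Semicomplete E) {d l w : ℕ}
    {T : Finset V} (hT : l ≤ T.card) (hdeg : ∀ v ∈ T, d ≤ dOutV E v ∧ dOutV E v ≤ d + w)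
    (hwild : ∀ v ∈ T, 3 * l + w + 2 * pathwidth E < wld E v) :
    IsSpider E d l w T (spiderLeft E d) (spiderRight E d w) := by
  refine ⟨hT, fun v hv => ⟨spiderLeft_subset_NinV hsc d v, ?_, ?_, filter_subset _ _, ?_,
    fun u hu => (mem_filter.1 hu).2⟩⟩
  · have := wld_le_card_spiderLeft hirr hsc (hdeg v hv).2
    have := hwild v hv
    omega
  · intro u hu
    simp only [spiderLeft, mem_erase, mem_sdiff, mem_filter, mem_univ, true_and] at hu
    exact hu.2.1
  · have := wld_add_dOutV_le_card_spiderRight hirr hsc (hdeg v hv).2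
    have := hwild v hv
    have := (hdeg v hv).1
    omega

end Spider

theorem tame_degree_tangle_or_spider_general (E : V → V → Prop) [DecidableRel E]
    (hirr : Irreflexive E) (hsc : Semicomplete E)
    (l w : ℕ)
    (d : ℕ) (T : Finset V) (hT : IsDegTangle E d (2 * l) w T) :
    (∃ (d' : ℕ) (T' : Finset V), IsDegTangle E d' l w T' ∧
        ∀ v ∈ T', wld E v ≤ 3 * l + w + 2 * pathwidth E) ∨
    (∃ (d' : ℕ) (T' : Finset V) (L R : V → Finset V), IsSpider E d' l w T' L R) := by
  obtain ⟨hcard, hdeg⟩ := hT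
  set tame := T.filter fun v => wld E v ≤ 3 * l + w + 2 * pathwidth E
  set wild := T.filter fun v => ¬ wld E v ≤ 3 * l + w + 2 * pathwidth E
  have hsplit : tame.card + wild.card = 2 * l := hcard ▸ card_filter_add_card_filter_not _
  by_cases htame : l ≤ tame.card
  · obtain ⟨T', hT'sub, hT'card⟩ := exists_subset_card_eq htame
    exact .inl ⟨d, T', ⟨hT'card, fun v hv => hdeg v (mem_filter.1 (hT'sub hv)).1⟩,
      fun v hv => (mem_filter.1 (hT'sub hv)).2⟩
  · refine .inr ⟨d, wild, _, _, isSpider_of_wild hirr hsc (by omega)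
      (fun v hv => hdeg v (mem_filter.1 hv).1) fun v hv => ?_⟩
    exact not_le.1 (mem_filter.1 hv).2

/-- If a semicomplete digraph has a `(2l,w)`-degree tangle, then it has a tame
`(l,w)`-degree tangle or an `(l,w)`-spider. -/
theorem tame_degree_tangle_or_spider (E : V → V → Prop) [DecidableRel E]
    (hirr : Irreflexive E) (hsc : Semicomplete E)
    (l w : ℕ) (hl : 0 < l) (hw : 0 < w)
    (d : ℕ) (T : Finset V) (hT : IsDegTangle E d (2 * l) w T) :
    (∃ (d' : ℕ) (T' : Finset V), IsDegTangle E d' l w T' ∧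
        ∀ v ∈ T', wld E v ≤ 3 * l + w + 2 * pathwidth E) ∨
    (∃ (d' : ℕ) (T' : Finset V) (L R : V → Finset V), IsSpider E d' l w T' L R) :=
  tame_degree_tangle_or_spider_general E hirr hsc l w d T hT

end AlmostSemicomplete
end

section
/- Let G be a semicomplete digraph that has a (d,3l,w)-matching tangle. Then G has a tame (d,l,w)-matching tangle or a (d,l,w)-spider. -/
namespace AlmostSemicomplete

variable {V : Type} [Fintype V] [DecidableEq V]

section Decomp

variable {m : ℕ} (X : Fin m → Finset V)

/-- The set of bag indices containing `v`. -/
def bagsOf (v : V) : Finset (Fin m) := Finset.univ.filter fun i => v ∈ X i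

variable (hne : ∀ v : V, (bagsOf X v).Nonempty)

/-- First bag containing `v`. -/
def ffst (v : V) : Fin m := (bagsOf X v).min' (hne v)

/-- Last bag containing `v`. -/
def glst (v : V) : Fin m := (bagsOf X v).max' (hne v)

lemma mem_ffst (v : V) : v ∈ X (ffst X hne v) := by
  have h := (bagsOf X v).min'_mem (hne v)
  exact (Finset.mem_filter.1 h).2

lemma mem_glst (v : V) : v ∈ X (glst X hne v) := by
  have h := (bagsOf X v).max'_mem (hne v)
  exact (Finset.mem_filter.1 h).2

lemma ffst_le {v : V} {i : Fin m} (h : v ∈ X i) : ffst X hne v ≤ i :=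
  Finset.min'_le _ _ (by simp [bagsOf, h])

lemma le_glst {v : V} {i : Fin m} (h : v ∈ X i) : i ≤ glst X hne v :=
  Finset.le_max' _ _ (by simp [bagsOf, h])

lemma ffst_le_glst (v : V) : ffst X hne v ≤ glst X hne v :=
  ffst_le X hne (mem_glst X hne v)

variable (E : V → V → Prop) [DecidableRel E]

lemma mem_of_between (hdec : IsPathDecomp E X) {v : V} {i : Fin m}
    (h1 : ffst X hne v ≤ i) (h2 : i ≤ glst X hne v) : v ∈ X i :=
  hdec.2.2 v _ i _ h1 h2 (mem_ffst X hne v) (mem_glst X hne v)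

lemma edge_ffst_le (hdec : IsPathDecomp E X) {u v : V} (h : E u v) :
    ffst X hne v ≤ glst X hne u := by
  obtain ⟨i, j, hji, hui, hvj⟩ := hdec.2.1 u v h
  exact le_trans (ffst_le X hne hvj) (le_trans hji (le_glst X hne hui))

/-- Vertices whose whole interval lies strictly before bag `i`. -/
def Sset (i : Fin m) : Finset V := Finset.univ.filter fun z => glst X hne z < i

lemma Sset_mono {i j : Fin m} (h : i ≤ j) : Sset X hne i ⊆ Sset X hne j := by
  intro z hz
  simp only [Sset, Finset.mem_filter, Finset.mem_univ, true_and] at hz ⊢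
  exact lt_of_lt_of_le hz h

lemma Sset_subset_Nout (hsc : Semicomplete E) (hdec : IsPathDecomp E X) (z : V) :
    Sset X hne (ffst X hne z) ⊆ NoutV E z := by
  intro y hy
  simp only [Sset, Finset.mem_filter, Finset.mem_univ, true_and] at hy
  have hyz : y ≠ z := by
    rintro rfl
    exact absurd (ffst_le_glst X hne y) (not_le.2 hy)
  have hnE : ¬ E y z := fun hE => absurd (edge_ffst_le X hne E hdec hE) (not_le.2 hy)
  rcases hsc y z hyz with h | h
  · exact absurd h hnE
  · simp [NoutV, h]

lemma s_ffst_le (hsc : Semicomplete E) (hdec : IsPathDecomp E X) (z : V) :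
    (Sset X hne (ffst X hne z)).card ≤ dOutV E z :=
  Finset.card_le_card (Sset_subset_Nout X hne E hsc hdec z)

variable {p : ℕ}

lemma dOut_le_s_glst (hirr : Irreflexive E) (hdec : IsPathDecomp E X)
    (hbag : ∀ i, (X i).card ≤ p + 1) (z : V) :
    dOutV E z ≤ (Sset X hne (glst X hne z)).card + p := by
  have hsub : NoutV E z ⊆ Sset X hne (glst X hne z) ∪ (X (glst X hne z)).erase z := by
    intro y hy
    have hE : E z y := by simpa [NoutV] using hy
    have h1 : ffst X hne y ≤ glst X hne z := edge_ffst_le X hne E hdec hE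
    by_cases h2 : glst X hne y < glst X hne z
    · exact Finset.mem_union_left _ (by simp [Sset, h2])
    · refine Finset.mem_union_right _ (Finset.mem_erase.2 ⟨?_, ?_⟩)
      · rintro rfl; exact hirr _ hE
      · exact mem_of_between X hne E hdec h1 (not_lt.1 h2)
  have h3 : ((X (glst X hne z)).erase z).card ≤ p := by
    have := Finset.card_erase_of_mem (mem_glst X hne z)
    have := hbag (glst X hne z)
    omega
  calc dOutV E z ≤ ((Sset X hne (glst X hne z)) ∪ (X (glst X hne z)).erase z).card :=
        Finset.card_le_card hsub
    _ ≤ (Sset X hne (glst X hne z)).card + ((X (glst X hne z)).erase z).card :=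
        Finset.card_union_le _ _
    _ ≤ (Sset X hne (glst X hne z)).card + p := by omega

include hne in
lemma card_dOut_le (hirr : Irreflexive E) (hsc : Semicomplete E) (hdec : IsPathDecomp E X)
    (hbag : ∀ i, (X i).card ≤ p + 1) (D : ℕ) :
    (Finset.univ.filter fun z : V => dOutV E z ≤ D).card ≤ D + p + 1 := by
  rcases (Finset.univ.filter fun z : V => dOutV E z ≤ D).eq_empty_or_nonempty with h | hA
  · rw [h]; simp
  · obtain ⟨z₀, hz₀⟩ := hA
    have hz₀' : dOutV E z₀ ≤ D := (Finset.mem_filter.1 hz₀).2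
    have hJne : (Finset.univ.filter fun i : Fin m => (Sset X hne i).card ≤ D).Nonempty :=
      ⟨ffst X hne z₀, Finset.mem_filter.2 ⟨Finset.mem_univ _,
        le_trans (s_ffst_le X hne E hsc hdec z₀) hz₀'⟩⟩
    set js := (Finset.univ.filter fun i : Fin m => (Sset X hne i).card ≤ D).max' hJne
      with hjs
    have hjsJ : (Sset X hne js).card ≤ D :=
      (Finset.mem_filter.1 (Finset.max'_mem _ hJne)).2
    have hsub : (Finset.univ.filter fun z : V => dOutV E z ≤ D) ⊆ X js ∪ Sset X hne js := by
      intro z hz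
      have hzD : dOutV E z ≤ D := (Finset.mem_filter.1 hz).2
      have hfz : ffst X hne z ≤ js :=
        Finset.le_max' (Finset.univ.filter fun i : Fin m => (Sset X hne i).card ≤ D)
          (ffst X hne z) (Finset.mem_filter.2 ⟨Finset.mem_univ _,
          le_trans (s_ffst_le X hne E hsc hdec z) hzD⟩)
      by_cases h2 : glst X hne z < js
      · exact Finset.mem_union_right _ (Finset.mem_filter.2 ⟨Finset.mem_univ _, h2⟩)
      · exact Finset.mem_union_left _ (mem_of_between X hne E hdec hfz (not_lt.1 h2))
    calc (Finset.univ.filter fun z : V => dOutV E z ≤ D).card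
        ≤ (X js ∪ Sset X hne js).card := Finset.card_le_card hsub
      _ ≤ (X js).card + (Sset X hne js).card := Finset.card_union_le _ _
      _ ≤ D + p + 1 := by have := hbag js; omega

include hne in
lemma card_dOut_interval (hirr : Irreflexive E) (hsc : Semicomplete E)
    (hdec : IsPathDecomp E X) (hbag : ∀ i, (X i).card ≤ p + 1) (x D : ℕ) (hxD : x ≤ D) :
    (Finset.univ.filter fun z : V => x < dOutV E z ∧ dOutV E z ≤ D).card + x
      ≤ D + 2 * p + 1 := by
  rcases (Finset.univ.filter fun z : V => x < dOutV E z ∧ dOutV E z ≤ D).eq_empty_or_nonempty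
    with h | hM
  · rw [h]; simp only [Finset.card_empty]; omega
  · obtain ⟨z₀, hz₀⟩ := hM
    have hz₀' : x < dOutV E z₀ ∧ dOutV E z₀ ≤ D := (Finset.mem_filter.1 hz₀).2
    have hJne : (Finset.univ.filter fun i : Fin m => (Sset X hne i).card ≤ D).Nonempty :=
      ⟨ffst X hne z₀, Finset.mem_filter.2 ⟨Finset.mem_univ _,
        le_trans (s_ffst_le X hne E hsc hdec z₀) hz₀'.2⟩⟩
    set js := (Finset.univ.filter fun i : Fin m => (Sset X hne i).card ≤ D).max' hJne
      with hjs
    have hjsJ : (Sset X hne js).card ≤ D :=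
      (Finset.mem_filter.1 (Finset.max'_mem _ hJne)).2
    set Z := (Finset.univ.filter fun z : V => x < dOutV E z ∧ dOutV E z ≤ D).filter
      (fun z => glst X hne z < js) with hZ
    have hMsub : (Finset.univ.filter fun z : V => x < dOutV E z ∧ dOutV E z ≤ D)
        ⊆ X js ∪ Z := by
      intro z hz
      have hzD : x < dOutV E z ∧ dOutV E z ≤ D := (Finset.mem_filter.1 hz).2
      have hfz : ffst X hne z ≤ js :=
        Finset.le_max' (Finset.univ.filter fun i : Fin m => (Sset X hne i).card ≤ D)
          (ffst X hne z) (Finset.mem_filter.2 ⟨Finset.mem_univ _,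
          le_trans (s_ffst_le X hne E hsc hdec z) hzD.2⟩)
      by_cases h2 : glst X hne z < js
      · exact Finset.mem_union_right _ (Finset.mem_filter.2 ⟨hz, h2⟩)
      · exact Finset.mem_union_left _ (mem_of_between X hne E hdec hfz (not_lt.1 h2))
    have hMcard : (Finset.univ.filter fun z : V => x < dOutV E z ∧ dOutV E z ≤ D).card
        ≤ p + 1 + Z.card := by
      calc (Finset.univ.filter fun z : V => x < dOutV E z ∧ dOutV E z ≤ D).card
          ≤ (X js ∪ Z).card := Finset.card_le_card hMsub
        _ ≤ (X js).card + Z.card := Finset.card_union_le _ _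
        _ ≤ p + 1 + Z.card := by have := hbag js; omega
    rcases Z.eq_empty_or_nonempty with hZe | ⟨z₁, hz₁⟩
    · rw [hZe] at hMcard
      simp only [Finset.card_empty] at hMcard
      omega
    · have hz₁M := Finset.mem_filter.1 hz₁
      have hz₁deg : x < dOutV E z₁ := ((Finset.mem_filter.1 hz₁M.1).2).1
      have hglt : glst X hne z₁ < js := hz₁M.2
      have hIne : (Finset.univ.filter
          fun i : Fin m => x < (Sset X hne i).card + p).Nonempty :=
        ⟨glst X hne z₁, Finset.mem_filter.2 ⟨Finset.mem_univ _,
          lt_of_lt_of_le hz₁deg (dOut_le_s_glst X hne E hirr hdec hbag z₁)⟩⟩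
      set i₀ := (Finset.univ.filter
        fun i : Fin m => x < (Sset X hne i).card + p).min' hIne with hi₀
      have hi₀I : x < (Sset X hne i₀).card + p :=
        (Finset.mem_filter.1 (Finset.min'_mem _ hIne)).2
      have hi₀le : i₀ ≤ glst X hne z₁ :=
        Finset.min'_le (Finset.univ.filter fun i : Fin m => x < (Sset X hne i).card + p)
          (glst X hne z₁) (Finset.mem_filter.2 ⟨Finset.mem_univ _,
          lt_of_lt_of_le hz₁deg (dOut_le_s_glst X hne E hirr hdec hbag z₁)⟩)
      have hi₀js : i₀ ≤ js := le_of_lt (lt_of_le_of_lt hi₀le hglt)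
      have hZsub : Z ⊆ Sset X hne js \ Sset X hne i₀ := by
        intro z hz
        obtain ⟨hzM, hzlt⟩ := Finset.mem_filter.1 hz
        have hzdeg : x < dOutV E z := ((Finset.mem_filter.1 hzM).2).1
        have hgI : i₀ ≤ glst X hne z :=
          Finset.min'_le (Finset.univ.filter fun i : Fin m => x < (Sset X hne i).card + p)
            (glst X hne z) (Finset.mem_filter.2 ⟨Finset.mem_univ _,
            lt_of_lt_of_le hzdeg (dOut_le_s_glst X hne E hirr hdec hbag z)⟩)
        refine Finset.mem_sdiff.2 ⟨Finset.mem_filter.2 ⟨Finset.mem_univ _, hzlt⟩, ?_⟩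
        simp only [Sset, Finset.mem_filter, Finset.mem_univ, true_and]
        exact not_lt.2 hgI
      have hcards : Z.card + (Sset X hne i₀).card ≤ (Sset X hne js).card := by
        have h1 : Z.card ≤ (Sset X hne js \ Sset X hne i₀).card :=
          Finset.card_le_card hZsub
        have h2 : (Sset X hne js \ Sset X hne i₀).card
            = (Sset X hne js).card - (Sset X hne i₀).card :=
          Finset.card_sdiff_of_subset (Sset_mono X hne hi₀js)
        have h3 : (Sset X hne i₀).card ≤ (Sset X hne js).card :=
          Finset.card_le_card (Sset_mono X hne hi₀js)
        omega
      omega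

end Decomp


/-- If a semicomplete digraph has a `(d,3l,w)`-matching tangle, then it has a tame
`(d,l,w)`-matching tangle or a `(d,l,w)`-spider. -/
theorem tame_matching_tangle_or_spider (E : V → V → Prop) [DecidableRel E]
    (hirr : Irreflexive E) (hsc : Semicomplete E)
    (d l w : ℕ) (hl : 0 < l) (hw : 0 < w)
    (T₁ T₂ : Finset V) (hT : IsMatchTangle E d (3 * l) w T₁ T₂) :
    (∃ T₁' T₂' : Finset V, IsMatchTangle E d l w T₁' T₂' ∧
        (∀ v ∈ T₁', wld E v + dOutV E v ≤ 3 * l + d + w + 2 * pathwidth E) ∧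
        (∀ v ∈ T₂', wld E v + d ≤ 3 * l + dOutV E v + 2 * pathwidth E)) ∨
    (∃ (T : Finset V) (L R : V → Finset V), IsSpider E d l w T L R) := by
  classical
  obtain ⟨hT1card, hT2card, hT1deg, hT2deg, φ, hφ, hφE⟩ := hT
  set p := pathwidth E with hp
  have hmemset : p ∈ {k | ∃ (m : ℕ) (X : Fin m → Finset V),
      IsPathDecomp E X ∧ pdWidth X = k} := by
    apply Nat.sInf_mem
    refine ⟨pdWidth (fun _ : Fin 1 => (Finset.univ : Finset V)), 1,
      fun _ => Finset.univ, ⟨?_, ?_, ?_⟩, rfl⟩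
    · exact fun v => ⟨0, Finset.mem_univ v⟩
    · exact fun u v _ => ⟨0, 0, le_refl _, Finset.mem_univ _, Finset.mem_univ _⟩
    · exact fun v i j k _ _ _ _ => Finset.mem_univ _
  obtain ⟨m, X, hdec, hwidth⟩ := hmemset
  have hbag : ∀ i, (X i).card ≤ p + 1 := by
    intro i
    have h1 : (X i).card ≤ Finset.univ.sup fun j => (X j).card :=
      Finset.le_sup (f := fun j => (X j).card) (Finset.mem_univ i)
    have h2 : (Finset.univ.sup fun j => (X j).card) - 1 = p := hwidth
    omega
  have hne : ∀ v : V, (bagsOf X v).Nonempty := by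
    intro v
    obtain ⟨i, hi⟩ := hdec.1 v
    exact ⟨i, by simp [bagsOf, hi]⟩
  have lemA : ∀ D : ℕ,
      (Finset.univ.filter fun z : V => dOutV E z ≤ D).card ≤ D + p + 1 :=
    fun D => card_dOut_le X hne E hirr hsc hdec hbag D
  have lemN : ∀ x D : ℕ, x ≤ D →
      (Finset.univ.filter fun z : V => x < dOutV E z ∧ dOutV E z ≤ D).card + x
        ≤ D + 2 * p + 1 :=
    fun x D h => card_dOut_interval X hne E hirr hsc hdec hbag x D h
  set bad1 := T₁.filter (fun v => ¬(wld E v + dOutV E v ≤ 3 * l + d + w + 2 * p))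
    with hbad1
  set bad2 := T₂.filter (fun u => ¬(wld E u + d ≤ 3 * l + dOutV E u + 2 * p))
    with hbad2
  by_cases hb1 : l ≤ bad1.card
  · -- spider from the non-tame vertices of T₁
    right
    refine ⟨bad1,
      fun t => ((Finset.univ.filter fun u => dOutV E u ≤ dOutV E t) \ NoutV E t).erase t,
      fun t => (NoutV E t).filter fun z => d + w ≤ dOutV E z, hb1, ?_⟩
    intro v hv
    dsimp only
    rw [hbad1, Finset.mem_filter] at hv
    obtain ⟨hvT, hvbad⟩ := hv
    have hvd : dOutV E v ≤ d := hT1deg v hvT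
    have hvw : 3 * l + d + w + 2 * p + 1 ≤ wld E v + dOutV E v := by omega
    have hwld : ((Finset.univ.filter fun u => dOutV E u ≤ dOutV E v) \ NoutV E v).card
        = wld E v := rfl
    have hvmem : v ∈ (Finset.univ.filter fun u => dOutV E u ≤ dOutV E v) \ NoutV E v := by
      refine Finset.mem_sdiff.2 ⟨by simp, ?_⟩
      simp only [NoutV, Finset.mem_filter, Finset.mem_univ, true_and]
      exact hirr v
    refine ⟨?_, ?_, ?_, Finset.filter_subset _ _, ?_,
      fun z hz => (Finset.mem_filter.1 hz).2⟩
    · intro u hu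
      rw [Finset.mem_erase, Finset.mem_sdiff, Finset.mem_filter] at hu
      obtain ⟨hune, ⟨⟨_, hud⟩, hunout⟩⟩ := hu
      have hnvu : ¬ E v u := by
        simpa only [NoutV, Finset.mem_filter, Finset.mem_univ, true_and] using hunout
      rcases hsc u v hune with h | h
      · simp only [NinV, Finset.mem_filter, Finset.mem_univ, true_and]; exact h
      · exact absurd h hnvu
    · have hce := Finset.card_erase_of_mem hvmem
      omega
    · intro u hu
      rw [Finset.mem_erase, Finset.mem_sdiff, Finset.mem_filter] at hu
      exact le_trans hu.2.1.2 hvd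
    · -- big out-neighbors
      have hsplit : dOutV E v ≤ ((NoutV E v).filter fun z => d + w ≤ dOutV E z).card
          + ((NoutV E v).filter fun z => dOutV E z < d + w).card := by
        have hsub : NoutV E v ⊆ ((NoutV E v).filter fun z => d + w ≤ dOutV E z)
            ∪ ((NoutV E v).filter fun z => dOutV E z < d + w) := by
          intro z hz
          by_cases hdz : d + w ≤ dOutV E z
          · exact Finset.mem_union_left _ (Finset.mem_filter.2 ⟨hz, hdz⟩)
          · exact Finset.mem_union_right _ (Finset.mem_filter.2 ⟨hz, by omega⟩)
        calc dOutV E v = (NoutV E v).card := rfl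
          _ ≤ _ := Finset.card_le_card hsub
          _ ≤ _ := Finset.card_union_le _ _
      have hA' : (Finset.univ.filter fun z : V => dOutV E z < d + w).card
          ≤ d + w + p := by
        have heq : (Finset.univ.filter fun z : V => dOutV E z < d + w)
            = Finset.univ.filter fun z : V => dOutV E z ≤ d + w - 1 :=
          Finset.filter_congr (fun z _ => by omega)
        rw [heq]
        have := lemA (d + w - 1)
        omega
      have hdisj : Disjoint ((NoutV E v).filter fun z => dOutV E z < d + w)
          ((Finset.univ.filter fun u => dOutV E u ≤ dOutV E v) \ NoutV E v) := by
        rw [Finset.disjoint_left]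
        intro a ha haW
        exact (Finset.mem_sdiff.1 haW).2 (Finset.filter_subset _ _ ha)
      have hsubA' : ((NoutV E v).filter fun z => dOutV E z < d + w)
          ∪ ((Finset.univ.filter fun u => dOutV E u ≤ dOutV E v) \ NoutV E v)
          ⊆ Finset.univ.filter fun z : V => dOutV E z < d + w := by
        intro z hz
        rcases Finset.mem_union.1 hz with h | h
        · exact Finset.mem_filter.2 ⟨Finset.mem_univ _, (Finset.mem_filter.1 h).2⟩
        · have hzz : dOutV E z ≤ dOutV E v :=
            (Finset.mem_filter.1 (Finset.mem_sdiff.1 h).1).2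
          exact Finset.mem_filter.2 ⟨Finset.mem_univ _, by omega⟩
      have hNSW : ((NoutV E v).filter fun z => dOutV E z < d + w).card + wld E v
          ≤ d + w + p := by
        have hu := Finset.card_union_of_disjoint hdisj
        have h2 := Finset.card_le_card hsubA'
        omega
      omega
  · by_cases hb2 : l ≤ bad2.card
    · -- spider from the non-tame vertices of T₂
      right
      refine ⟨bad2,
        fun t => (Finset.univ.filter fun z => dOutV E z ≤ d) \ NoutV E t,
        fun t => (NoutV E t).filter fun z => d + w ≤ dOutV E z, hb2, ?_⟩
      intro u hu
      dsimp only
      rw [hbad2, Finset.mem_filter] at hu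
      obtain ⟨huT, hubad⟩ := hu
      have hud : d + w + 1 ≤ dOutV E u := hT2deg u huT
      have huw : 3 * l + dOutV E u + 2 * p + 1 ≤ wld E u + d := by omega
      have hwld : ((Finset.univ.filter fun z => dOutV E z ≤ dOutV E u) \ NoutV E u).card
          = wld E u := rfl
      refine ⟨?_, ?_, ?_, Finset.filter_subset _ _, ?_,
        fun z hz => (Finset.mem_filter.1 hz).2⟩
      · intro a ha
        rw [Finset.mem_sdiff, Finset.mem_filter] at ha
        obtain ⟨⟨_, had⟩, hanout⟩ := ha
        have hau : a ≠ u := by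
          intro h
          rw [h] at had
          omega
        have hnua : ¬ E u a := by
          simpa only [NoutV, Finset.mem_filter, Finset.mem_univ, true_and] using hanout
        rcases hsc a u hau with h | h
        · simp only [NinV, Finset.mem_filter, Finset.mem_univ, true_and]; exact h
        · exact absurd h hnua
      · -- card of small in-neighbors
        have hWsub : (Finset.univ.filter fun z => dOutV E z ≤ dOutV E u) \ NoutV E u
            ⊆ ((Finset.univ.filter fun z => dOutV E z ≤ d) \ NoutV E u)
              ∪ (Finset.univ.filter fun z : V => d < dOutV E z ∧ dOutV E z ≤ dOutV E u) := by
          intro z hz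
          rw [Finset.mem_sdiff, Finset.mem_filter] at hz
          obtain ⟨⟨_, hzd⟩, hzn⟩ := hz
          by_cases h : dOutV E z ≤ d
          · exact Finset.mem_union_left _
              (Finset.mem_sdiff.2 ⟨Finset.mem_filter.2 ⟨Finset.mem_univ _, h⟩, hzn⟩)
          · exact Finset.mem_union_right _
              (Finset.mem_filter.2 ⟨Finset.mem_univ _, by omega, hzd⟩)
        have h1 : wld E u ≤ ((Finset.univ.filter fun z => dOutV E z ≤ d) \ NoutV E u).card
            + (Finset.univ.filter fun z : V => d < dOutV E z ∧ dOutV E z ≤ dOutV E u).card := by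
          rw [← hwld]
          exact le_trans (Finset.card_le_card hWsub) (Finset.card_union_le _ _)
        have h2 := lemN d (dOutV E u) (by omega)
        omega
      · intro z hz
        rw [Finset.mem_sdiff, Finset.mem_filter] at hz
        exact hz.1.2
      · -- big out-neighbors
        have hsplit : dOutV E u ≤ ((NoutV E u).filter fun z => d + w ≤ dOutV E z).card
            + ((NoutV E u).filter fun z => dOutV E z < d + w).card := by
          have hsub : NoutV E u ⊆ ((NoutV E u).filter fun z => d + w ≤ dOutV E z)
              ∪ ((NoutV E u).filter fun z => dOutV E z < d + w) := by
            intro z hz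
            by_cases hdz : d + w ≤ dOutV E z
            · exact Finset.mem_union_left _ (Finset.mem_filter.2 ⟨hz, hdz⟩)
            · exact Finset.mem_union_right _ (Finset.mem_filter.2 ⟨hz, by omega⟩)
          calc dOutV E u = (NoutV E u).card := rfl
            _ ≤ _ := Finset.card_le_card hsub
            _ ≤ _ := Finset.card_union_le _ _
        have hAu : (Finset.univ.filter fun z : V => dOutV E z ≤ dOutV E u).card
            ≤ dOutV E u + p + 1 := lemA (dOutV E u)
        have hdisj : Disjoint ((NoutV E u).filter fun z => dOutV E z < d + w)
            ((Finset.univ.filter fun z => dOutV E z ≤ dOutV E u) \ NoutV E u) := by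
          rw [Finset.disjoint_left]
          intro a ha haW
          exact (Finset.mem_sdiff.1 haW).2 (Finset.filter_subset _ _ ha)
        have hsubAu : ((NoutV E u).filter fun z => dOutV E z < d + w)
            ∪ ((Finset.univ.filter fun z => dOutV E z ≤ dOutV E u) \ NoutV E u)
            ⊆ Finset.univ.filter fun z : V => dOutV E z ≤ dOutV E u := by
          intro z hz
          rcases Finset.mem_union.1 hz with h | h
          · have hzz : dOutV E z < d + w := (Finset.mem_filter.1 h).2
            exact Finset.mem_filter.2 ⟨Finset.mem_univ _, by omega⟩
          · exact (Finset.mem_sdiff.1 h).1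
        have hNSW : ((NoutV E u).filter fun z => dOutV E z < d + w).card + wld E u
            ≤ dOutV E u + p + 1 := by
          have hu2 := Finset.card_union_of_disjoint hdisj
          have h2 := Finset.card_le_card hsubAu
          omega
        omega
    · -- tame matching tangle
      left
      push_neg at hb1 hb2
      set good := T₁.filter (fun v => (wld E v + dOutV E v ≤ 3 * l + d + w + 2 * p)
          ∧ (wld E (φ v) + d ≤ 3 * l + dOutV E (φ v) + 2 * p)) with hgood
      have hcount : T₁.card ≤ good.card + bad1.card + bad2.card := by
        have hsub : T₁ ⊆ good ∪ bad1
            ∪ T₁.filter (fun v => ¬(wld E (φ v) + d ≤ 3 * l + dOutV E (φ v) + 2 * p)) := by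
          intro v hv
          by_cases h1 : wld E v + dOutV E v ≤ 3 * l + d + w + 2 * p
          · by_cases h2 : wld E (φ v) + d ≤ 3 * l + dOutV E (φ v) + 2 * p
            · exact Finset.mem_union_left _ (Finset.mem_union_left _
                (Finset.mem_filter.2 ⟨hv, h1, h2⟩))
            · exact Finset.mem_union_right _ (Finset.mem_filter.2 ⟨hv, h2⟩)
          · exact Finset.mem_union_left _ (Finset.mem_union_right _
              (Finset.mem_filter.2 ⟨hv, h1⟩))
        have hinj : (T₁.filter
            (fun v => ¬(wld E (φ v) + d ≤ 3 * l + dOutV E (φ v) + 2 * p))).card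
            ≤ bad2.card := by
          apply Finset.card_le_card_of_injOn φ
          · intro a ha
            rw [Finset.mem_coe, Finset.mem_filter] at ha
            rw [Finset.mem_coe, hbad2, Finset.mem_filter]
            exact ⟨hφ.mapsTo ha.1, ha.2⟩
          · exact hφ.injOn.mono (fun a ha => (Finset.mem_filter.1 ha).1)
        have h3 := Finset.card_le_card hsub
        have h4 := Finset.card_union_le (good ∪ bad1)
          (T₁.filter (fun v => ¬(wld E (φ v) + d ≤ 3 * l + dOutV E (φ v) + 2 * p)))
        have h5 := Finset.card_union_le good bad1
        omega
      have hgoodl : l ≤ good.card := by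
        rw [hT1card] at hcount
        omega
      obtain ⟨T₁', hT₁'sub, hT₁'card⟩ := Finset.exists_subset_card_eq hgoodl
      have hT₁'T₁ : T₁' ⊆ T₁ := hT₁'sub.trans (Finset.filter_subset _ _)
      have hinj' : Set.InjOn φ ↑T₁' := hφ.injOn.mono (fun a ha => hT₁'T₁ ha)
      refine ⟨T₁', T₁'.image φ, ⟨hT₁'card, ?_, ?_, ?_, φ, ?_, ?_⟩, ?_, ?_⟩
      · rw [Finset.card_image_of_injOn hinj', hT₁'card]
      · exact fun v hv => hT1deg v (hT₁'T₁ hv)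
      · intro u hu
        obtain ⟨v, hv, rfl⟩ := Finset.mem_image.1 hu
        exact hT2deg _ (hφ.mapsTo (hT₁'T₁ hv))
      · rw [Finset.coe_image]
        exact ⟨Set.mapsTo_image φ _, hinj', Set.surjOn_image φ _⟩
      · exact fun v hv => hφE v (hT₁'T₁ hv)
      · intro v hv
        exact ((Finset.mem_filter.1 (hT₁'sub hv)).2).1
      · intro u hu
        obtain ⟨v, hv, rfl⟩ := Finset.mem_image.1 hu
        exact ((Finset.mem_filter.1 (hT₁'sub hv)).2).2

end AlmostSemicomplete
end

section
/- Let G be an undirected graph on n vertices with maximum degree at most d, and let N be any integer such that N ≥ n + d + 1 and N·d is even. Then there exists a d-regular undirected graph on N vertices that contains G as a subgraph. -/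
/-!
Embed `G` into `Fin N` and, among the supergraphs of maximum degree at most `d`, take one, `H`,
with maximal degree sum. Suppose some `u` has degree `< d`. Since `N d` and the degree sum are
even, there is a second deficiency at some `v` (possibly `v = u`). If `u ≠ v` are non-adjacent,
add the edge `uv`. Otherwise `u ∈ {v} ∪ N(v)`; as `N ≥ n + d + 1`, some `w` outside the image of
`G` is neither `u` nor adjacent to it, and `w` is saturated (else join `u` and `w`). Since
`|N(w)| = d > |N(v)|` and `u ∉ N(w)`, some neighbour `x` of `w` is neither `v` nor adjacent to `v`,
and replacing `wx` by `uw` and `vx` raises the degree sum by two.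
-/

open Finset

namespace SimpleGraph

variable {α : Type*} {G H K : SimpleGraph α} {a b u v w : α} {d : ℕ}

lemma ncard_neighborSet_sup_of_disjoint [Finite α] (h : Disjoint G H) (y : α) :
    ((G ⊔ H).neighborSet y).ncard = (G.neighborSet y).ncard + (H.neighborSet y).ncard := by
  rw [neighborSet_sup, Set.ncard_union_eq (disjoint_neighborSet.2 h y)]

lemma ncard_neighborSet_edge [DecidableEq α] (hab : a ≠ b) (y : α) :
    ((edge a b).neighborSet y).ncard = (if y = a then 1 else 0) + (if y = b then 1 else 0) := by
  by_cases hya : y = a <;> by_cases hyb : y = b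
  · exact absurd (hya ▸ hyb) hab
  · rw [show (edge a b).neighborSet y = {b} by ext; simp [edge_adj]; grind]
    simp [hya, hab]
  · rw [show (edge a b).neighborSet y = {a} by ext; simp [edge_adj]; grind]
    simp [hyb, hab.symm]
  · rw [show (edge a b).neighborSet y = ∅ by ext; simp [edge_adj]; grind]
    simp [hya, hyb]

lemma ncard_neighborSet_sup_edge [Finite α] [DecidableEq α] (hab : a ≠ b) (h : ¬G.Adj a b)
    (y : α) : ((G ⊔ edge a b).neighborSet y).ncard =
      (G.neighborSet y).ncard + (if y = a then 1 else 0) + (if y = b then 1 else 0) := by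
  rw [ncard_neighborSet_sup_of_disjoint ((disjoint_edge _).2 h), ncard_neighborSet_edge hab,
    add_assoc]

lemma ncard_neighborSet_sdiff_edge [Finite α] [DecidableEq α] (h : G.Adj a b) (y : α) :
    ((G \ edge a b).neighborSet y).ncard + (if y = a then 1 else 0) + (if y = b then 1 else 0) =
      (G.neighborSet y).ncard := by
  conv_rhs => rw [← sdiff_sup_cancel ((edge_le_iff _).2 (Or.inr h))]
  rw [ncard_neighborSet_sup_of_disjoint disjoint_sdiff_self_left, ncard_neighborSet_edge h.ne,
    add_assoc]

lemma ncard_neighborSet_switch [Finite α] [DecidableEq α] {x : α} (huw : u ≠ w)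
    (hnuw : ¬H.Adj u w) (hwx : H.Adj w x) (hvx : v ≠ x) (hnvx : ¬H.Adj v x) (y : α) :
    ((H \ edge w x ⊔ edge u w ⊔ edge v x).neighborSet y).ncard =
      (H.neighborSet y).ncard + (if y = u then 1 else 0) + (if y = v then 1 else 0) := by
  have hxu : x ≠ u := by rintro rfl; exact hnuw hwx.symm
  have hxw : x ≠ w := hwx.ne'
  have hnuw' : ¬(H \ edge w x).Adj u w := fun h => hnuw h.1
  have hnvx' : ¬(H \ edge w x ⊔ edge u w).Adj v x := by
    simp only [sup_adj, sdiff_adj, edge_adj]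
    grind
  rw [ncard_neighborSet_sup_edge hvx hnvx', ncard_neighborSet_sup_edge huw hnuw',
    ← ncard_neighborSet_sdiff_edge hwx y]
  omega

lemma even_sum_ncard_neighborSet [Fintype α] (H : SimpleGraph α) :
    Even (∑ y, (H.neighborSet y).ncard) := by
  classical
  have hdeg (y : α) : (H.neighborSet y).ncard = H.degree y := by
    rw [Set.ncard_eq_toFinset_card', Set.toFinset_card, card_neighborSet_eq_degree]
  simp_rw [hdeg, sum_degrees_eq_twice_card_edges]
  exact even_two_mul _

lemma sum_ncard_neighborSet_of_eq_add [Fintype α] [DecidableEq α] {H' : SimpleGraph α}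
    (h : ∀ y, (H'.neighborSet y).ncard =
      (H.neighborSet y).ncard + (if y = a then 1 else 0) + (if y = b then 1 else 0)) :
    ∑ y, (H'.neighborSet y).ncard = ∑ y, (H.neighborSet y).ncard + 2 := by
  simp [h, sum_add_distrib]

lemma exists_second_deficiency [Fintype α] [DecidableEq α]
    (hd : ∀ y, (H.neighborSet y).ncard ≤ d) (heven : Even (Fintype.card α * d))
    (hu : (H.neighborSet u).ncard < d) :
    ∃ v, ∀ y,
      (H.neighborSet y).ncard + (if y = u then 1 else 0) + (if y = v then 1 else 0) ≤ d := by
  set g : α → ℕ := fun y => (H.neighborSet y).ncard + if y = u then 1 else 0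
  have hlt : ∑ y, (H.neighborSet y).ncard < ∑ _y : α, d :=
    sum_lt_sum (fun y _ => hd y) ⟨u, mem_univ u, hu⟩
  obtain ⟨v, -, hv⟩ : ∃ v ∈ univ, g v < d := by
    refine exists_lt_of_sum_lt ?_
    have hg : ∑ y, g y = ∑ y, (H.neighborSet y).ncard + 1 := by simp [g, sum_add_distrib]
    obtain ⟨k, hk⟩ := even_sum_ncard_neighborSet H
    obtain ⟨m, hm⟩ := heven
    rw [sum_const, card_univ, smul_eq_mul] at hlt ⊢
    omega
  refine ⟨v, fun y => ?_⟩
  have hgy : g y ≤ d := by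
    by_cases hyu : y = u
    · simp only [g, hyu, if_true]; omega
    · simp only [g, hyu, if_false]; exact hd y
  by_cases hyv : y = v
  · subst hyv; simp only [g] at hv; simp only [if_true]; omega
  · simp only [g] at hgy; simp only [hyv, if_false]; omega

lemma exists_not_mem_support_not_adj [Finite α]
    (hcard : K.support.ncard + d + 1 ≤ Nat.card α) (hu : (H.neighborSet u).ncard < d) :
    ∃ w, w ∉ K.support ∧ w ≠ u ∧ ¬H.Adj u w := by
  by_contra! h
  have hcover : (Set.univ : Set α) ⊆ K.support ∪ insert u (H.neighborSet u) := by
    intro w _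
    by_cases hwK : w ∈ K.support
    · exact Or.inl hwK
    by_cases hwu : w = u
    · exact Or.inr (Or.inl hwu)
    · exact Or.inr (Or.inr (h w hwK hwu))
  have := (Set.ncard_le_ncard hcover).trans (Set.ncard_union_le _ _)
  have := Set.ncard_insert_le u (H.neighborSet u)
  rw [Set.ncard_univ] at *
  omega

lemma exists_adj_not_adj_of_ncard_lt [Finite α]
    (hlt : (H.neighborSet v).ncard < (H.neighborSet w).ncard)
    (hu : u ∈ insert v (H.neighborSet v)) (hwu : ¬H.Adj w u) :
    ∃ x, H.Adj w x ∧ x ≠ v ∧ ¬H.Adj v x := by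
  by_contra! h
  have hsub : H.neighborSet w ⊆ insert v (H.neighborSet v) \ {u} := by
    intro x hx
    refine ⟨?_, fun hxu => hwu (hxu ▸ hx)⟩
    by_cases hxv : x = v
    · exact Or.inl hxv
    · exact Or.inr (h x hx hxv)
  have := Set.ncard_le_ncard hsub
  have := Set.ncard_insert_le v (H.neighborSet v)
  rw [Set.ncard_sdiff_singleton_of_mem hu] at *
  omega

lemma add_ite_add_ite_le {f : α → ℕ} [DecidableEq α] (hf : ∀ y, f y ≤ d) (hab : a ≠ b)
    (ha : f a < d) (hb : f b < d) (y : α) :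
    f y + (if y = a then 1 else 0) + (if y = b then 1 else 0) ≤ d := by
  by_cases hya : y = a
  · subst hya; simp [hab]; omega
  by_cases hyb : y = b
  · subst hyb; simp [hya]; omega
  · simp [hya, hyb, hf y]

lemma exists_augmentation [Fintype α] [DecidableEq α] (hKH : K ≤ H)
    (hd : ∀ y, (H.neighborSet y).ncard ≤ d)
    (hcard : K.support.ncard + d + 1 ≤ Fintype.card α) (heven : Even (Fintype.card α * d))
    (hu : (H.neighborSet u).ncard < d) :
    ∃ H' a b, K ≤ H' ∧
      (∀ y, (H.neighborSet y).ncard + (if y = a then 1 else 0) + (if y = b then 1 else 0) ≤ d) ∧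
      ∀ y, (H'.neighborSet y).ncard =
        (H.neighborSet y).ncard + (if y = a then 1 else 0) + (if y = b then 1 else 0) := by
  by_cases hjoin : ∃ a b, a ≠ b ∧ ¬H.Adj a b ∧
      (H.neighborSet a).ncard < d ∧ (H.neighborSet b).ncard < d
  · obtain ⟨a, b, hab, hnab, ha, hb⟩ := hjoin
    exact ⟨H ⊔ edge a b, a, b, le_sup_of_le_left hKH, add_ite_add_ite_le hd hab ha hb,
      ncard_neighborSet_sup_edge hab hnab⟩
  push Not at hjoin
  obtain ⟨v, hv⟩ := exists_second_deficiency hd heven hu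
  obtain ⟨w, hwK, hwu, hnuw⟩ :=
    exists_not_mem_support_not_adj (by rwa [Nat.card_eq_fintype_card]) hu
  have hw : (H.neighborSet w).ncard = d := le_antisymm (hd w) (hjoin u w hwu.symm hnuw hu)
  have hvd : (H.neighborSet v).ncard < d := by
    have := hv v
    simp only [if_true] at this
    omega
  have huv : u ∈ insert v (H.neighborSet v) := by
    by_cases huv : u = v
    · exact Or.inl huv
    · by_contra h
      exact (hjoin u v huv (fun h' => h (Or.inr h'.symm)) hu).not_gt hvd
  obtain ⟨x, hwx, hxv, hnvx⟩ :=
    exists_adj_not_adj_of_ncard_lt (hvd.trans_eq hw.symm) huv (fun h => hnuw h.symm)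
  have hKwx : K ≤ H \ edge w x :=
    le_sdiff.2 ⟨hKH, (disjoint_edge _).2 fun h => hwK h.left_mem_support⟩
  exact ⟨H \ edge w x ⊔ edge u w ⊔ edge v x, u, v, le_sup_of_le_left (le_sup_of_le_left hKwx),
    hv, ncard_neighborSet_switch hwu.symm hnuw hwx hxv.symm hnvx⟩

theorem exists_le_forall_ncard_neighborSet_eq [Fintype α] (K : SimpleGraph α)
    (hK : ∀ y, (K.neighborSet y).ncard ≤ d)
    (hcard : K.support.ncard + d + 1 ≤ Fintype.card α) (heven : Even (Fintype.card α * d)) :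
    ∃ H, K ≤ H ∧ ∀ y, (H.neighborSet y).ncard = d := by
  classical
  obtain ⟨H, ⟨hKH, hd⟩, hmax⟩ :=
    Set.exists_max_image {H | K ≤ H ∧ ∀ y, (H.neighborSet y).ncard ≤ d}
      (fun H => ∑ y, (H.neighborSet y).ncard) (Set.toFinite _) ⟨K, le_rfl, hK⟩
  refine ⟨H, hKH, fun u => (hd u).eq_or_lt.resolve_right fun hu => ?_⟩
  obtain ⟨H', a, b, hKH', hle, hH'⟩ := exists_augmentation hKH hd hcard heven hu
  have := hmax H' ⟨hKH', fun y => (hH' y).trans_le (hle y)⟩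
  rw [sum_ncard_neighborSet_of_eq_add hH'] at this
  omega

lemma ncard_neighborSet_map_le {β : Type*} {G : SimpleGraph β} (f : β ↪ α)
    (hG : ∀ y, (G.neighborSet y).ncard ≤ d) (y : α) : ((G.map f).neighborSet y).ncard ≤ d := by
  by_cases hy : y ∈ Set.range f
  · obtain ⟨y, rfl⟩ := hy
    rw [neighborSet_map, Set.ncard_image_of_injective _ f.injective]
    exact hG y
  · have : (G.map f).neighborSet y = ∅ := by
      refine Set.eq_empty_of_forall_notMem fun z hz => hy ?_
      rw [← Set.image_univ]
      exact Set.image_mono (Set.subset_univ _) ((support_map f G).subset hz.left_mem_support)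
    simp [this]

end SimpleGraph

/-- Every graph `G` on `n` vertices with maximum degree at most `d` is a subgraph of
some `d`-regular graph on `N` vertices, for any `N ≥ n + d + 1` with `N·d` even. -/
theorem exists_regular_supergraph {V : Type} [Fintype V]
    (G : SimpleGraph V) (n d N : ℕ) (hn : Fintype.card V = n)
    (hd : ∀ v : V, (G.neighborSet v).ncard ≤ d)
    (hN : n + d + 1 ≤ N) (heven : Even (N * d)) :
    ∃ H : SimpleGraph (Fin N),
      (∀ v : Fin N, (H.neighborSet v).ncard = d) ∧
      ∃ f : V → Fin N, Function.Injective f ∧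
        ∀ u v : V, G.Adj u v → H.Adj (f u) (f v) := by
  obtain ⟨f⟩ : Nonempty (V ↪ Fin N) :=
    Function.Embedding.nonempty_of_card_le (by rw [Fintype.card_fin]; omega)
  have hsupp : (G.map f).support.ncard ≤ n := by
    rw [SimpleGraph.support_map, Set.ncard_image_of_injective _ f.injective, ← hn,
      ← Nat.card_eq_fintype_card]
    exact Set.ncard_le_card _
  obtain ⟨H, hGH, hreg⟩ := SimpleGraph.exists_le_forall_ncard_neighborSet_eq (G.map f)
    (SimpleGraph.ncard_neighborSet_map_le f hd) (by rw [Fintype.card_fin]; omega)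
    (by rwa [Fintype.card_fin])
  exact ⟨H, hreg, f, f.injective, fun u v h => hGH (SimpleGraph.map_adj_apply.2 h)⟩
end
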